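/- arXiv:math/9902048 — 2 statements merged into one kernel-verified Lean document; each statement's English description precedes it below -/
import Mathlib

section
/- Let H be an elementary abelian 2-group of rank n with generating set z₁,…,z_n. Then the set L = {[z_{i₁},…,z_{i_s}, z_{i₁}⋯z_{i_s}] : 2 ≤ s ≤ n, 1 ≤ i₁ < ⋯ < i_s ≤ n} is a basis of 𝔹_H: it generates 𝔹_H, each of its elements has order two, and the only relations among its elements are 2α = 0. In particular 𝔹_H ≅ (ℤ/2ℤ)^{2^n − 1 − n}. -/
namespace SingOrbit

variable (G : Type*) [Group G]

/-- The map from conjugacy classes to the abelianization. -/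
def classAb : ConjClasses G → Additive (Abelianization G) :=
  Quotient.lift (fun g : G => Additive.ofMul (Abelianization.of g)) <| by
    intro a b hab
    obtain ⟨c, hc⟩ := isConj_iff.mp (hab : IsConj a b)
    subst hc
    show Additive.ofMul (Abelianization.of a) = Additive.ofMul (Abelianization.of (c * a * c⁻¹))
    congr 1
    rw [map_mul, map_mul, map_inv, mul_comm (Abelianization.of c) (Abelianization.of a),
      mul_inv_cancel_right]

/-- Nontrivial conjugacy classes. -/
def NCC := {c : ConjClasses G // c ≠ 1}

/-- The homomorphism `φ` from the free abelian group on the nontrivial conjugacy classes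
to the abelianization, sending a conjugacy class to the image of any representative. -/
noncomputable def phi : FreeAbelianGroup (NCC G) →+ Additive (Abelianization G) :=
  FreeAbelianGroup.lift fun c => classAb G c.1

/-- The basis element of the free abelian group corresponding to a conjugacy class
(`0` for the trivial class). -/
noncomputable def clsC (c : ConjClasses G) : FreeAbelianGroup (NCC G) :=
  letI := Classical.dec (c = 1)
  if h : c = 1 then 0 else FreeAbelianGroup.of ⟨c, h⟩

/-- The basis element corresponding to the conjugacy class of a group element. -/
noncomputable def clsF (x : G) : FreeAbelianGroup (NCC G) := clsC G (ConjClasses.mk x)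

/-- The subgroup generated by the elements `x̂ + x̂⁻¹`. -/
noncomputable def NSub : AddSubgroup (FreeAbelianGroup (NCC G)) :=
  AddSubgroup.closure {a | ∃ x : G, a = clsF G x + clsF G x⁻¹}

/-- The group `𝔹_G` of singular orbit data: `(ker φ) / N`. -/
noncomputable def SOD := (phi G).ker ⧸ ((NSub G).addSubgroupOf (phi G).ker)

noncomputable instance : AddCommGroup (SOD G) :=
  inferInstanceAs (AddCommGroup ((phi G).ker ⧸ ((NSub G).addSubgroupOf (phi G).ker)))

variable {G}

lemma classAb_mk (x : G) :
    classAb G (ConjClasses.mk x) = Additive.ofMul (Abelianization.of x) := rfl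

lemma mk_eq_one_iff {x : G} : ConjClasses.mk x = 1 ↔ x = 1 := by
  rw [ConjClasses.one_eq_mk_one, ConjClasses.mk_eq_mk_iff_isConj, isConj_one_left]

lemma phi_of (c : NCC G) : phi G (FreeAbelianGroup.of c) = classAb G c.1 :=
  FreeAbelianGroup.lift_apply_of _ _

lemma phi_clsF (x : G) : phi G (clsF G x) = Additive.ofMul (Abelianization.of x) := by
  rw [clsF, clsC]
  split_ifs with h
  · have hx : x = 1 := mk_eq_one_iff.mp h
    subst hx
    simp
  · exact phi_of (G := G) ⟨ConjClasses.mk x, h⟩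

/-- The element of the free abelian group associated to a list of group elements. -/
noncomputable def sumF (l : List G) : FreeAbelianGroup (NCC G) := (l.map (clsF G)).sum

lemma sumF_nil : sumF ([] : List G) = 0 := rfl

lemma sumF_cons (a : G) (t : List G) : sumF (a :: t) = clsF G a + sumF t := by
  simp [sumF]

lemma phi_sumF (l : List G) :
    phi G (sumF l) = Additive.ofMul (Abelianization.of l.prod) := by
  induction l with
  | nil => simp [sumF_nil]
  | cons a t ih =>
    rw [sumF_cons, map_add, phi_clsF, ih, List.prod_cons, map_mul, ofMul_mul]

lemma abOf_eq_one_iff {x : G} : Abelianization.of x = 1 ↔ x ∈ commutator G :=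
  QuotientGroup.eq_one_iff x

lemma sumF_mem_ker {l : List G} (h : l.prod ∈ commutator G) : sumF l ∈ (phi G).ker := by
  rw [AddMonoidHom.mem_ker, phi_sumF, abOf_eq_one_iff.mpr h]
  rfl

/-- The singular orbit datum `[x̂₁, …, x̂_q]` associated to a list of group elements whose
product lies in the commutator subgroup. -/
noncomputable def data (l : List G) (h : l.prod ∈ commutator G) : SOD G :=
  (QuotientAddGroup.mk ⟨sumF l, sumF_mem_ker h⟩ : SOD G)

lemma sq_list_mem {H : Type*} [CommGroup H] (hH : ∀ x : H, x ^ 2 = 1) (l : List H) :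
    ((l ++ [l.prod]).prod ∈ commutator H) := by
  have h1 : (l ++ [l.prod]).prod = 1 := by
    rw [List.prod_append, List.prod_singleton, ← pow_two]
    exact hH _
  rw [h1]
  exact Subgroup.one_mem _

/-! Every element of `H` is its own inverse, so `N = 2F` and reduction mod 2 turns `F/N` into
the `𝔽₂`-vector space on the nontrivial elements of `H`; these are the products `∏_{i ∈ S} z_i`
over the nonempty `S`, each obtained once. Reading off the mod-2 coefficients at the products
over the `S` with `|S| ≥ 2` defines a map `𝔹_H → 𝔽₂^{S : |S| ≥ 2}` sending the datum of `T` to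
the basis vector at `T`. It is injective: once those coefficients vanish, the odd coefficients
sit at some generators `z_i`, `φ` sends the element to their product, and membership in `ker φ`
forces that set of generators to be empty. -/

section SubsetProducts

variable {H : Type*} [CommGroup H] {ι : Type*} [Fintype ι] {z : ι → H}

lemma exists_finset_prod_eq_of_mem_closure_range (hH : ∀ x : H, x ^ 2 = 1) {x : H}
    (hx : x ∈ Subgroup.closure (Set.range z)) : ∃ S : Finset ι, ∏ i ∈ S, z i = x := by
  obtain ⟨a, rfl⟩ := Subgroup.exists_of_mem_closure_range z x hx
  refine ⟨Finset.univ.filter fun i => a i % 2 = 1, ?_⟩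
  rw [Finset.prod_filter]
  refine Finset.prod_congr rfl fun i _ => ?_
  rw [zpow_eq_zpow_emod' (a i) (hH (z i))]
  rcases Int.emod_two_eq_zero_or_one (a i) with h | h <;> simp [h]

lemma bijective_finset_prod (hH : ∀ x : H, x ^ 2 = 1)
    (hgen : Subgroup.closure (Set.range z) = ⊤) (hcard : Nat.card H = 2 ^ Fintype.card ι) :
    Function.Bijective fun S : Finset ι => ∏ i ∈ S, z i := by
  refine Function.Surjective.bijective_of_nat_card_le
    (fun x => exists_finset_prod_eq_of_mem_closure_range hH (hgen ▸ Subgroup.mem_top x)) ?_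
  rw [hcard, Nat.card_eq_fintype_card, Fintype.card_finset]

end SubsetProducts

lemma card_subtype_two_le_card_finset (n : ℕ) :
    Fintype.card {T : Finset (Fin n) // 2 ≤ T.card} = 2 ^ n - 1 - n := by
  have hsmall : (Finset.univ.filter fun T : Finset (Fin n) => ¬ 2 ≤ T.card) =
      insert ∅ (Finset.univ.map ⟨fun i => {i}, Finset.singleton_injective⟩) := by
    ext T
    simp [Nat.le_one_iff_eq_zero_or_eq_one, Finset.card_eq_one, eq_comm]
  have hcard := Finset.card_filter_add_card_filter_not
    (s := (Finset.univ : Finset (Finset (Fin n)))) (p := fun T => 2 ≤ T.card)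
  rw [hsmall, Finset.card_insert_of_notMem (by simp), Finset.card_map, Finset.card_univ,
    Finset.card_univ, Fintype.card_finset, Fintype.card_fin] at hcard
  rw [Fintype.card_subtype]
  omega

section PiSingle

variable {ι A : Type*} [DecidableEq ι] [AddCommGroup A] (Φ : A ≃+ (ι → ZMod 2)) {b : ι → A}

lemma addOrderOf_eq_two_of_map_eq_single (hb : ∀ i, Φ (b i) = Pi.single i 1) (i : ι) :
    addOrderOf (b i) = 2 := by
  rw [← AddEquiv.addOrderOf_eq Φ, hb]
  exact (addOrderOf_injective (AddMonoidHom.single (fun _ => ZMod 2) i)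
    (Pi.single_injective (M := fun _ => ZMod 2) i) 1).trans (ZMod.addOrderOf_one 2)

variable [Fintype ι]

lemma closure_range_single_one :
    AddSubgroup.closure (Set.range fun i : ι => Pi.single i (1 : ZMod 2)) = ⊤ := by
  refine eq_top_iff.mpr fun v _ => ?_
  rw [← Finset.univ_sum_single v]
  refine AddSubgroup.sum_mem _ fun i _ => ?_
  rw [← ZMod.natCast_zmod_val (v i), ← nsmul_one, Pi.single_smul]
  exact AddSubgroup.nsmul_mem _ (AddSubgroup.subset_closure (Set.mem_range_self i)) _

lemma closure_range_eq_top_of_map_eq_single (hb : ∀ i, Φ (b i) = Pi.single i 1) :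
    AddSubgroup.closure (Set.range b) = ⊤ := by
  have hb' : b = (Φ.symm : (ι → ZMod 2) →+ A) ∘ fun i => Pi.single i 1 :=
    funext fun i => by simp [← hb]
  rw [hb', Set.range_comp, ← AddMonoidHom.map_closure, closure_range_single_one]
  exact AddSubgroup.map_top_of_surjective _ Φ.symm.surjective

lemma eq_zero_of_sum_zsmul_eq_zero_of_map_eq_single (hb : ∀ i, Φ (b i) = Pi.single i 1)
    (e : ι → ℤ) (he : ∀ i, e i = 0 ∨ e i = 1) (hsum : ∑ i, e i • b i = 0) (i : ι) :
    e i = 0 := by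
  have hcast : (e i : ZMod 2) = 0 := by
    simpa [hb, Pi.single_apply] using congrFun (congrArg Φ hsum) i
  rcases he i with h | h
  · exact h
  · simp [h] at hcast

end PiSingle

section ModTwo

variable {G : Type*} [Group G]

-- Indexed by all conjugacy classes, so that it can be evaluated at `mk a` before knowing `a ≠ 1`.
open Classical in
noncomputable def coeffModTwo (c : ConjClasses G) : FreeAbelianGroup (NCC G) →+ ZMod 2 :=
  FreeAbelianGroup.lift fun d => if d.1 = c then 1 else 0

lemma coeffModTwo_eq_coeff (d : NCC G) (x : FreeAbelianGroup (NCC G)) :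
    coeffModTwo d.1 x = (FreeAbelianGroup.coeff d x : ZMod 2) := by
  classical
  suffices coeffModTwo d.1 = (Int.castAddHom (ZMod 2)).comp (FreeAbelianGroup.coeff d) from
    DFunLike.congr_fun this x
  ext d'
  have hval : d.1 = d'.1 ↔ d = d' := Subtype.ext_iff.symm
  simp [coeffModTwo, FreeAbelianGroup.coeff, Finsupp.single_apply, hval, eq_comm]

open Classical in
lemma coeffModTwo_clsF {c : ConjClasses G} (hc : c ≠ 1) (x : G) :
    coeffModTwo c (clsF G x) = if ConjClasses.mk x = c then 1 else 0 := by
  by_cases hx : ConjClasses.mk x = 1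
  · rw [clsF, clsC, dif_pos hx, map_zero, if_neg (hx ▸ Ne.symm hc)]
  · rw [clsF, clsC, dif_neg hx]
    exact FreeAbelianGroup.lift_apply_of _ _

lemma NSub_le_ker_phi : NSub G ≤ (phi G).ker := by
  refine (AddSubgroup.closure_le _).mpr ?_
  rintro _ ⟨x, rfl⟩
  rw [SetLike.mem_coe, AddMonoidHom.mem_ker, map_add, phi_clsF, phi_clsF, ← ofMul_mul,
    ← map_mul, mul_inv_cancel, map_one, ofMul_one]

lemma exists_clsF_eq_of (d : NCC G) : ∃ x : G, clsF G x = FreeAbelianGroup.of d := by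
  obtain ⟨x, hx⟩ := ConjClasses.exists_rep d.1
  refine ⟨x, ?_⟩
  rw [clsF, clsC, dif_neg (hx ▸ d.2)]
  exact congrArg _ (Subtype.ext hx)

lemma inv_eq_self_of_sq_eq_one {x : G} (hx : x ^ 2 = 1) : x⁻¹ = x :=
  inv_eq_of_mul_eq_one_right (by rw [← sq, hx])

variable (hG : ∀ x : G, x ^ 2 = 1)
include hG

lemma clsF_add_clsF_mem_NSub (x : G) : clsF G x + clsF G x ∈ NSub G :=
  AddSubgroup.subset_closure ⟨x, by rw [inv_eq_self_of_sq_eq_one (hG x)]⟩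

lemma coeffModTwo_eq_zero_of_mem_NSub {x : FreeAbelianGroup (NCC G)} (hx : x ∈ NSub G)
    (c : ConjClasses G) : coeffModTwo c x = 0 := by
  refine AddSubgroup.closure_induction (fun y hy => ?_) (map_zero _)
    (fun _ _ _ _ h h' => by rw [map_add, h, h', add_zero])
    (fun _ _ h => by rw [map_neg, h, neg_zero]) hx
  obtain ⟨x, rfl⟩ := hy
  rw [inv_eq_self_of_sq_eq_one (hG x), map_add]
  exact CharTwo.add_self_eq_zero _

lemma mem_NSub_of_coeffModTwo_eq_zero {x : FreeAbelianGroup (NCC G)}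
    (hx : ∀ d : NCC G, coeffModTwo d.1 x = 0) : x ∈ NSub G := by
  rw [FreeAbelianGroup.eq_sum_support_coeff_smul_of x]
  refine AddSubgroup.sum_mem _ fun d _ => ?_
  obtain ⟨k, hk⟩ : (2 : ℤ) ∣ FreeAbelianGroup.coeff d x :=
    (ZMod.intCast_zmod_eq_zero_iff_dvd _ 2).mp (coeffModTwo_eq_coeff d x ▸ hx d)
  obtain ⟨a, ha⟩ := exists_clsF_eq_of d
  rw [hk, mul_comm, mul_zsmul, two_zsmul, ← ha]
  exact AddSubgroup.zsmul_mem _ (clsF_add_clsF_mem_NSub hG a) k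

end ModTwo

lemma sumF_append {G : Type*} [Group G] (l₁ l₂ : List G) :
    sumF (l₁ ++ l₂) = sumF l₁ + sumF l₂ := by
  simp [sumF]

lemma sumF_map_sort {G ι : Type*} [Group G] [LinearOrder ι] (f : ι → G) (S : Finset ι) :
    sumF ((S.sort (· ≤ ·)).map f) = ∑ i ∈ S, clsF G (f i) := by
  rw [sumF, List.map_map, ((Finset.sort_perm_toList S _).map _).sum_eq, Finset.sum_map_toList]
  rfl

lemma prod_map_sort {M ι : Type*} [CommMonoid M] [LinearOrder ι] (f : ι → M) (S : Finset ι) :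
    ((S.sort (· ≤ ·)).map f).prod = ∏ i ∈ S, f i :=
  ((Finset.sort_perm_toList S _).map f).prod_eq.trans (Finset.prod_map_toList S f)

section ElementaryAbelian

variable {H : Type*} [CommGroup H] {ι : Type*} {z : ι → H}

open Classical in
lemma coeffModTwo_mk_clsF {a : H} (ha : a ≠ 1) (x : H) :
    coeffModTwo (ConjClasses.mk a) (clsF H x) = if x = a then 1 else 0 := by
  rw [coeffModTwo_clsF (mk_eq_one_iff.not.mpr ha)]
  exact if_congr ConjClasses.mk_injective.eq_iff rfl rfl

lemma prod_ne_one_of_nonempty (hbij : Function.Bijective fun S : Finset ι => ∏ i ∈ S, z i)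
    {S : Finset ι} (hS : S.Nonempty) : ∏ i ∈ S, z i ≠ 1 := fun h =>
  hS.ne_empty (hbij.1 (h.trans Finset.prod_empty.symm))

lemma ne_prod_of_two_le_card (hbij : Function.Bijective fun S : Finset ι => ∏ i ∈ S, z i)
    (i : ι) {T : Finset ι} (hT : 2 ≤ T.card) : z i ≠ ∏ j ∈ T, z j := fun h => by
  have hiT : {i} = T := hbij.1 ((Finset.prod_singleton z i).trans h)
  rw [← hiT, Finset.card_singleton] at hT
  omega

noncomputable def prodCoeffModTwo (z : ι → H) :
    FreeAbelianGroup (NCC H) →+ ({T : Finset ι // 2 ≤ T.card} → ZMod 2) :=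
  AddMonoidHom.pi fun T => coeffModTwo (ConjClasses.mk (∏ i ∈ T.1, z i))

lemma prodCoeffModTwo_apply (x : FreeAbelianGroup (NCC H))
    (T : {T : Finset ι // 2 ≤ T.card}) :
    prodCoeffModTwo z x T = coeffModTwo (ConjClasses.mk (∏ i ∈ T.1, z i)) x :=
  rfl

lemma prodCoeffModTwo_sumF_sort_append_prod [LinearOrder ι]
    (hbij : Function.Bijective fun S : Finset ι => ∏ i ∈ S, z i)
    (T : {T : Finset ι // 2 ≤ T.card}) :
    prodCoeffModTwo z
        (sumF (((T.1.sort (· ≤ ·)).map z) ++ [((T.1.sort (· ≤ ·)).map z).prod])) =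
      Pi.single T 1 := by
  funext T'
  have hT' : ∏ i ∈ T'.1, z i ≠ 1 :=
    prod_ne_one_of_nonempty hbij (Finset.card_pos.mp (by have := T'.2; omega))
  have hsum : ∑ i ∈ T.1, coeffModTwo (ConjClasses.mk (∏ j ∈ T'.1, z j)) (clsF H (z i)) = 0 :=
    Finset.sum_eq_zero fun i _ => by
      rw [coeffModTwo_mk_clsF hT', if_neg (ne_prod_of_two_le_card hbij i T'.2)]
  rw [prodCoeffModTwo_apply]
  simp only [sumF_append, sumF_map_sort, prod_map_sort, map_add, map_sum, hsum, zero_add]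
  rw [show sumF [∏ i ∈ T.1, z i] = clsF H (∏ i ∈ T.1, z i) by simp [sumF],
    coeffModTwo_mk_clsF hT']
  by_cases h : T' = T
  · rw [h, if_pos rfl, Pi.single_eq_same]
  · rw [if_neg fun h' => h (Subtype.ext (hbij.1 h').symm), Pi.single_eq_of_ne h]

lemma sub_sum_clsF_mem_NSub [Fintype ι] (hH : ∀ x : H, x ^ 2 = 1)
    (hbij : Function.Bijective fun S : Finset ι => ∏ i ∈ S, z i)
    {x : FreeAbelianGroup (NCC H)} (hx : prodCoeffModTwo z x = 0) :
    x - ∑ i with coeffModTwo (ConjClasses.mk (z i)) x = 1, clsF H (z i) ∈ NSub H := by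
  classical
  have hz : Function.Injective z := fun i j h =>
    Finset.singleton_injective (hbij.1 (by simpa using h))
  refine mem_NSub_of_coeffModTwo_eq_zero hH fun d => ?_
  obtain ⟨a, ha⟩ := ConjClasses.exists_rep d.1
  obtain ⟨S, rfl⟩ := hbij.2 a
  beta_reduce at ha
  have hS : S.Nonempty := Finset.nonempty_iff_ne_empty.mpr fun h => d.2 <| by
    rw [← ha, h, Finset.prod_empty, ConjClasses.one_eq_mk_one]
  rw [← ha, map_sub, map_sum]
  simp_rw [coeffModTwo_mk_clsF (prod_ne_one_of_nonempty hbij hS)]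
  rcases (Nat.one_le_iff_ne_zero.mpr hS.card_ne_zero).eq_or_lt with hS1 | hS2
  · obtain ⟨j, rfl⟩ := Finset.card_eq_one.mp hS1.symm
    simp_rw [Finset.prod_singleton, hz.eq_iff, Finset.sum_ite_eq', Finset.mem_filter,
      Finset.mem_univ, true_and]
    generalize coeffModTwo (ConjClasses.mk (z j)) x = u
    revert u
    decide
  · rw [← prodCoeffModTwo_apply (T := ⟨S, hS2⟩), hx,
      Finset.sum_eq_zero fun i _ => if_neg (ne_prod_of_two_le_card hbij i hS2), sub_zero]
    rfl

lemma mem_NSub_of_mem_ker_of_prodCoeffModTwo_eq_zero [Fintype ι] (hH : ∀ x : H, x ^ 2 = 1)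
    (hbij : Function.Bijective fun S : Finset ι => ∏ i ∈ S, z i)
    {x : FreeAbelianGroup (NCC H)} (hφ : x ∈ (phi H).ker) (hx : prodCoeffModTwo z x = 0) :
    x ∈ NSub H := by
  have hy := sub_sum_clsF_mem_NSub hH hbij hx
  set I : Finset ι := {i | coeffModTwo (ConjClasses.mk (z i)) x = 1}
  have hI : ∏ i ∈ I, z i = 1 := by
    have h := sub_mem hφ (NSub_le_ker_phi hy)
    rw [sub_sub_cancel, AddMonoidHom.mem_ker, map_sum] at h
    simp_rw [phi_clsF, ← ofMul_prod, ← map_prod, ofMul_eq_zero] at h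
    exact Abelianization.equivOfComm.injective
      (h.trans (map_one Abelianization.equivOfComm).symm)
  rwa [hbij.1 (hI.trans Finset.prod_empty.symm), Finset.sum_empty, sub_zero] at hy

end ElementaryAbelian

lemma exists_addEquiv_SOD_prodCoeffModTwo {H ι : Type*} [CommGroup H] [Fintype ι]
    [LinearOrder ι] {z : ι → H} (hH : ∀ x : H, x ^ 2 = 1)
    (hbij : Function.Bijective fun S : Finset ι => ∏ i ∈ S, z i) :
    ∃ Φ : SOD H ≃+ ({T : Finset ι // 2 ≤ T.card} → ZMod 2),
      ∀ (l : List H) (hl : l.prod ∈ commutator H), Φ (data l hl) = prodCoeffModTwo z (sumF l) := by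
  let Q : SOD H →+ ({T : Finset ι // 2 ≤ T.card} → ZMod 2) :=
    QuotientAddGroup.lift _ ((prodCoeffModTwo z).comp (phi H).ker.subtype) fun y hy =>
      funext fun _ => coeffModTwo_eq_zero_of_mem_NSub hH (AddSubgroup.mem_addSubgroupOf.mp hy) _
  have hinj : Function.Injective Q := by
    refine (injective_iff_map_eq_zero Q).mpr fun a ha => ?_
    induction a using QuotientAddGroup.induction_on with
    | H y =>
      exact (QuotientAddGroup.eq_zero_iff y).mpr (AddSubgroup.mem_addSubgroupOf.mpr
        (mem_NSub_of_mem_ker_of_prodCoeffModTwo_eq_zero hH hbij y.2 ha))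
  have hsurj : Function.Surjective Q := by
    refine AddMonoidHom.range_eq_top.mp (eq_top_iff.mpr ?_)
    rw [← closure_range_single_one, AddSubgroup.closure_le]
    rintro _ ⟨T, rfl⟩
    exact ⟨data _ (sq_list_mem hH _), prodCoeffModTwo_sumF_sort_append_prod hbij T⟩
  exact ⟨AddEquiv.ofBijective Q ⟨hinj, hsurj⟩, fun _ _ => rfl⟩

/-- for an elementary abelian 2-group `H` of rank `n` with generators
`z₁, …, z_n`, the elements `[z_{i₁}, …, z_{i_s}, z_{i₁}⋯z_{i_s}]` for subsets of size
`≥ 2` form a basis of `𝔹_H`: they generate, each has order two, the only relations are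
`2α = 0`, and `𝔹_H ≅ (ℤ/2ℤ)^(2ⁿ - 1 - n)`. -/
theorem stmt12 (H : Type*) [CommGroup H] (n : ℕ) (z : Fin n → H)
    (hH : ∀ x : H, x ^ 2 = 1)
    (hgen : Subgroup.closure (Set.range z) = (⊤ : Subgroup H))
    (hcard : Nat.card H = 2 ^ n)
    (b : {T : Finset (Fin n) // 2 ≤ T.card} → SOD H)
    (hb : ∀ T : {T : Finset (Fin n) // 2 ≤ T.card},
      b T = data (((T.1.sort (· ≤ ·)).map z) ++ [((T.1.sort (· ≤ ·)).map z).prod])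
        (sq_list_mem hH _)) :
    (∀ T, addOrderOf (b T) = 2) ∧
    AddSubgroup.closure (Set.range b) = ⊤ ∧
    (∀ e : {T : Finset (Fin n) // 2 ≤ T.card} → ℤ, (∀ T, e T = 0 ∨ e T = 1) →
      ∑ T, e T • b T = 0 → ∀ T, e T = 0) ∧
    Nonempty (SOD H ≃+ (Fin (2 ^ n - 1 - n) → ZMod 2)) := by
  have hbij := bijective_finset_prod hH hgen (by rwa [Fintype.card_fin])
  obtain ⟨Φ, hΦ⟩ := exists_addEquiv_SOD_prodCoeffModTwo hH hbij
  have hbΦ : ∀ T, Φ (b T) = Pi.single T 1 := fun T => by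
    rw [hb T, hΦ, prodCoeffModTwo_sumF_sort_append_prod hbij T]
  refine ⟨addOrderOf_eq_two_of_map_eq_single Φ hbΦ, closure_range_eq_top_of_map_eq_single Φ hbΦ,
    eq_zero_of_sum_zsmul_eq_zero_of_map_eq_single Φ hbΦ, ⟨Φ.trans ?_⟩⟩
  exact AddEquiv.arrowCongr (Fintype.equivFinOfCardEq (card_subtype_two_le_card_finset n))
    (.refl _)

end SingOrbit
end

section
/- Let C₃ = ⟨a⟩ be the cyclic subgroup of order 3 of S₃ generated by a 3-cycle a, and let i : C₃ ↪ S₃ be the inclusion. Then the induction map 𝔹_i : 𝔹_{C₃} → 𝔹_{S₃} is surjective; it sends the element [a, a, a] ∈ 𝔹_{C₃} to the generator [â] of 𝔹_{S₃} ≅ ℤ/2ℤ, identifying 𝔹_i with the surjection of ℤ onto ℤ/2ℤ (where 𝔹_{C₃} ≅ ℤ is generated by [a, a, a]). -/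
/-!
Both `C₃ = ⟨g⟩` and `S₃` have exactly two nontrivial conjugacy classes `û, v̂`, so every element
of the free abelian group is `m û + n v̂`, and it lies in `ker φ` iff `u ^ m * v ^ n` is a product
of commutators.

For `C₃` (`u = g`, `v = g²`) this means `3 ∣ m - n`, while `N` is spanned by `ĝ + ĝ²`; hence
`m ĝ + n ĝ² ↦ (m - n) / 3` identifies `𝔹_{C₃}` with `ℤ`, sending `[g, g, g]` to `1`.

For `S₃` (`u` a transposition, `v = a`) the sign forces `m` to be even, and every element is
conjugate to its inverse, so `N = 2F`. Thus `𝔹_{S₃}` is generated by `[â]`, which has order two: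
it is nonzero because the parity of the `â`-coefficient vanishes on `N`. Finally `[a, a, a] - [a] = â + â⁻¹ ∈ N`, so `𝔹_i` maps the generator
of `𝔹_{C₃}` onto `[â]`.
-/

namespace SingOrbit

variable (G : Type*) [Group G]

variable {G}

/-! ### Functoriality -/

variable {H : Type*} [Group H]

noncomputable def pushC (f : G →* H) : ConjClasses G → FreeAbelianGroup (NCC H) :=
  Quotient.lift (fun x : G => clsF H (f x)) <| by
    intro a b hab
    show clsF H (f a) = clsF H (f b)
    have hmk : ConjClasses.mk (f a) = ConjClasses.mk (f b) :=
      ConjClasses.mk_eq_mk_iff_isConj.mpr (f.map_isConj (hab : IsConj a b))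
    rw [clsF, clsF, hmk]

lemma pushC_mk (f : G →* H) (x : G) : pushC f (ConjClasses.mk x) = clsF H (f x) := rfl

/-- The induced map on free abelian groups. -/
noncomputable def FMap (f : G →* H) : FreeAbelianGroup (NCC G) →+ FreeAbelianGroup (NCC H) :=
  FreeAbelianGroup.lift fun c => pushC f c.1

lemma FMap_clsF (f : G →* H) (x : G) : FMap f (clsF G x) = clsF H (f x) := by
  by_cases h : ConjClasses.mk x = 1
  · have hx : x = 1 := mk_eq_one_iff.mp h
    subst hx
    have h1 : clsF G (1 : G) = 0 := by
      rw [clsF, clsC, dif_pos (mk_eq_one_iff.mpr rfl)]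
    have h2 : clsF H ((f 1 : H)) = 0 := by
      rw [map_one, clsF, clsC, dif_pos (mk_eq_one_iff.mpr rfl)]
    rw [h1, map_zero, h2]
  · have hx : clsF G x = FreeAbelianGroup.of ⟨ConjClasses.mk x, h⟩ := by
      rw [clsF, clsC, dif_neg h]
    rw [hx, FMap]
    exact FreeAbelianGroup.lift_apply_of _ _

lemma FMap_sumF (f : G →* H) (l : List G) : FMap f (sumF l) = sumF (l.map f) := by
  induction l with
  | nil => simp [sumF_nil]
  | cons a t ih =>
    rw [sumF_cons, map_add, FMap_clsF, ih, List.map_cons, sumF_cons]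

lemma phi_FMap (f : G →* H) (a : FreeAbelianGroup (NCC G)) :
    phi H (FMap f a) = MonoidHom.toAdditive (Abelianization.map f) (phi G a) := by
  have : (phi H).comp (FMap f)
      = (MonoidHom.toAdditive (Abelianization.map f)).comp (phi G) := by
    apply FreeAbelianGroup.lift_ext
    intro c
    obtain ⟨x, hx⟩ := ConjClasses.mk_surjective c.1
    simp only [AddMonoidHom.comp_apply]
    rw [show FMap f (FreeAbelianGroup.of c) = pushC f c.1 from FreeAbelianGroup.lift_apply_of _ _,
      phi_of, ← hx, pushC_mk, phi_clsF, classAb_mk]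
    show Additive.ofMul (Abelianization.of (f x))
      = Additive.ofMul (Abelianization.map f (Abelianization.of x))
    rw [Abelianization.map_of]
  calc phi H (FMap f a) = ((phi H).comp (FMap f)) a := rfl
    _ = _ := by rw [this]; rfl

lemma FMap_mem_ker (f : G →* H) {a : FreeAbelianGroup (NCC G)} (ha : a ∈ (phi G).ker) :
    FMap f a ∈ (phi H).ker := by
  rw [AddMonoidHom.mem_ker] at ha ⊢
  rw [phi_FMap, ha, map_zero]

lemma FMap_mem_NSub (f : G →* H) {a : FreeAbelianGroup (NCC G)} (ha : a ∈ NSub G) :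
    FMap f a ∈ NSub H := by
  induction ha using AddSubgroup.closure_induction with
  | mem x hx =>
    obtain ⟨y, rfl⟩ := hx
    rw [map_add, FMap_clsF, FMap_clsF]
    apply AddSubgroup.subset_closure
    exact ⟨f y, by rw [map_inv]⟩
  | zero => rw [map_zero]; exact (NSub H).zero_mem
  | add x y _ _ hx hy => rw [map_add]; exact (NSub H).add_mem hx hy
  | neg x _ hx => rw [map_neg]; exact (NSub H).neg_mem hx

noncomputable def kFMap (f : G →* H) : (phi G).ker →+ (phi H).ker :=
  AddMonoidHom.codRestrict ((FMap f).domRestrict ((phi G).ker)) _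
    (fun a => FMap_mem_ker f a.2)

/-- The functorial homomorphism `𝔹_f : 𝔹_G → 𝔹_H` induced by a group homomorphism. -/
noncomputable def SODmap (f : G →* H) : SOD G →+ SOD H :=
  QuotientAddGroup.map _ _ (kFMap f) (by
    intro x hx
    rw [AddSubgroup.mem_addSubgroupOf] at hx
    rw [AddSubgroup.mem_comap, AddSubgroup.mem_addSubgroupOf]
    exact FMap_mem_NSub f hx)

lemma SODmap_data (f : G →* H) (l : List G) (h : l.prod ∈ commutator G)
    (h' : (l.map f).prod ∈ commutator H) :
    SODmap f (data l h) = data (l.map f) h' := by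
  show QuotientAddGroup.map _ _ (kFMap f) _ (QuotientAddGroup.mk _) = _
  rw [QuotientAddGroup.map_mk]
  unfold data
  congr 1
  exact Subtype.ext (FMap_sumF f l)

lemma threeCycle_pow_three (a : Equiv.Perm (Fin 3)) (ha : a.IsThreeCycle) : a ^ 3 = 1 := by
  have h := pow_orderOf_eq_one a
  rwa [ha.orderOf] at h

open scoped commutatorElement in
lemma threeCycle_mem_commutator (a : Equiv.Perm (Fin 3)) (ha : a.IsThreeCycle) :
    a ∈ commutator (Equiv.Perm (Fin 3)) := by
  have h3 : a ^ 3 = 1 := threeCycle_pow_three a ha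
  have hne : a ≠ 1 := by
    intro h
    have horder := ha.orderOf
    rw [h, orderOf_one] at horder
    exact absurd horder (by norm_num)
  have key : ∀ b : Equiv.Perm (Fin 3), b ^ 3 = 1 → b ≠ 1 →
      ⁅Equiv.swap (0 : Fin 3) 1, b⁆ = b := by decide
  rw [← key a h3 hne, commutator_def]
  exact Subgroup.commutator_mem_commutator (Subgroup.mem_top _) (Subgroup.mem_top _)

lemma zpowers_cube_mem (a : Equiv.Perm (Fin 3)) (h3 : a ^ 3 = 1) :
    (([⟨a, Subgroup.mem_zpowers a⟩, ⟨a, Subgroup.mem_zpowers a⟩,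
        ⟨a, Subgroup.mem_zpowers a⟩] : List ↥(Subgroup.zpowers a))).prod
      ∈ commutator ↥(Subgroup.zpowers a) := by
  have h1 : (([⟨a, Subgroup.mem_zpowers a⟩, ⟨a, Subgroup.mem_zpowers a⟩,
      ⟨a, Subgroup.mem_zpowers a⟩] : List ↥(Subgroup.zpowers a))).prod = 1 := by
    apply Subtype.ext
    simp only [List.prod_cons, List.prod_nil, mul_one, MulMemClass.coe_mul,
      OneMemClass.coe_one]
    have h3' : a ^ 3 = a * a * a := by rw [pow_succ, pow_succ, pow_one]
    rw [h3'] at h3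
    exact h3
  rw [h1]
  exact Subgroup.one_mem _

lemma clsF_one : clsF G (1 : G) = 0 := by
  rw [clsF, clsC, dif_pos (mk_eq_one_iff.mpr rfl)]

lemma clsF_of_ne_one {x : G} (hx : x ≠ 1) :
    clsF G x = FreeAbelianGroup.of (α := NCC G) ⟨ConjClasses.mk x, mk_eq_one_iff.not.mpr hx⟩ :=
  dif_neg _

lemma clsF_eq_of_isConj {x y : G} (h : IsConj x y) : clsF G x = clsF G y := by
  rw [clsF, clsF, ConjClasses.mk_eq_mk_iff_isConj.mpr h]

lemma clsF_add_clsF_inv_mem_NSub (x : G) : clsF G x + clsF G x⁻¹ ∈ NSub G :=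
  AddSubgroup.subset_closure ⟨x, rfl⟩

lemma hom_ext_clsF {A : Type*} [AddCommGroup A] {f f' : FreeAbelianGroup (NCC G) →+ A}
    (h : ∀ x : G, f (clsF G x) = f' (clsF G x)) : f = f' := by
  refine FreeAbelianGroup.lift_ext _ _ fun c => ?_
  obtain ⟨x, hx⟩ := ConjClasses.mk_surjective c.1
  have hc : FreeAbelianGroup.of c = clsF G x := by
    rw [clsF_of_ne_one (fun h1 => c.2 (by rw [← hx, h1, ConjClasses.one_eq_mk_one]))]
    exact congrArg _ (Subtype.ext hx.symm)
  rw [hc, h]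

open Classical in
noncomputable def classCoeff (u : G) : FreeAbelianGroup (NCC G) →+ ℤ :=
  FreeAbelianGroup.lift fun c => if c.1 = ConjClasses.mk u then 1 else 0

open Classical in
lemma classCoeff_clsF_of_ne_one (u : G) {x : G} (hx : x ≠ 1) :
    classCoeff u (clsF G x) = if ConjClasses.mk x = ConjClasses.mk u then 1 else 0 := by
  rw [clsF_of_ne_one hx]
  exact FreeAbelianGroup.lift_apply_of _ _

lemma classCoeff_clsF_of_isConj {u x : G} (hu : u ≠ 1) (h : IsConj u x) :
    classCoeff u (clsF G x) = 1 := by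
  have hx : x ≠ 1 := fun hx => hu (isConj_one_left.mp (hx ▸ h))
  rw [classCoeff_clsF_of_ne_one u hx,
    if_pos (ConjClasses.mk_eq_mk_iff_isConj.mpr h.symm)]

lemma classCoeff_clsF_of_not_isConj {u x : G} (h : ¬IsConj u x) :
    classCoeff u (clsF G x) = 0 := by
  by_cases hx : x = 1
  · rw [hx, clsF_one, map_zero]
  · rw [classCoeff_clsF_of_ne_one u hx,
      if_neg fun h' => h (ConjClasses.mk_eq_mk_iff_isConj.mp h'.symm)]

section TwoClasses

variable {u v : G} (hu : u ≠ 1) (hv : v ≠ 1) (huv : ¬IsConj u v)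
  (hcls : ∀ x : G, x = 1 ∨ IsConj u x ∨ IsConj v x)
include hu hv huv hcls

lemma eq_classCoeff_smul_add_classCoeff_smul (x : FreeAbelianGroup (NCC G)) :
    x = classCoeff u x • clsF G u + classCoeff v x • clsF G v := by
  have hid : AddMonoidHom.id _ = (zmultiplesHom _ (clsF G u)).comp (classCoeff u)
      + (zmultiplesHom _ (clsF G v)).comp (classCoeff v) := by
    refine hom_ext_clsF fun y => ?_
    simp only [AddMonoidHom.id_apply, AddMonoidHom.add_apply, AddMonoidHom.comp_apply,
      zmultiplesHom_apply]
    rcases hcls y with rfl | h | h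
    · simp only [clsF_one, map_zero, zero_smul, add_zero]
    · rw [classCoeff_clsF_of_isConj hu h, clsF_eq_of_isConj h,
        classCoeff_clsF_of_not_isConj fun h' => huv (h.trans h'.symm), one_smul, zero_smul,
        add_zero]
    · rw [classCoeff_clsF_of_isConj hv h, clsF_eq_of_isConj h,
        classCoeff_clsF_of_not_isConj fun h' => huv (h'.trans h.symm), one_smul, zero_smul,
        zero_add]
  exact DFunLike.congr_fun hid x

lemma pow_mul_pow_mem_commutator_of_mem_ker {x : FreeAbelianGroup (NCC G)}
    (hx : x ∈ (phi G).ker) : u ^ classCoeff u x * v ^ classCoeff v x ∈ commutator G := by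
  rw [AddMonoidHom.mem_ker, eq_classCoeff_smul_add_classCoeff_smul hu hv huv hcls x, map_add,
    map_zsmul, map_zsmul, phi_clsF, phi_clsF, ← ofMul_zpow, ← ofMul_zpow, ← ofMul_mul,
    ← map_zpow, ← map_zpow, ← map_mul, ofMul_eq_zero, abOf_eq_one_iff] at hx
  exact hx

end TwoClasses

namespace SOD

noncomputable def mk : (phi G).ker →+ SOD G := QuotientAddGroup.mk' _

lemma mk_surjective : Function.Surjective (mk : (phi G).ker →+ SOD G) :=
  QuotientAddGroup.mk_surjective

lemma mk_eq_zero_iff {x : (phi G).ker} : mk x = 0 ↔ (x : FreeAbelianGroup (NCC G)) ∈ NSub G :=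
  (QuotientAddGroup.eq_zero_iff x).trans AddSubgroup.mem_addSubgroupOf

lemma mk_eq_mk_iff {x y : (phi G).ker} :
    mk x = mk y ↔ (x : FreeAbelianGroup (NCC G)) - y ∈ NSub G := by
  rw [← sub_eq_zero, ← map_sub, mk_eq_zero_iff, AddSubgroup.coe_sub]

noncomputable def lift {A : Type*} [AddCommGroup A] (ψ : FreeAbelianGroup (NCC G) →+ A)
    (hψ : NSub G ≤ ψ.ker) : SOD G →+ A :=
  QuotientAddGroup.lift _ (ψ.comp (phi G).ker.subtype) fun _ hx =>
    hψ (AddSubgroup.mem_addSubgroupOf.mp hx)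

lemma lift_data {A : Type*} [AddCommGroup A] (ψ : FreeAbelianGroup (NCC G) →+ A)
    (hψ : NSub G ≤ ψ.ker) (l : List G) (h : l.prod ∈ commutator G) :
    lift ψ hψ (data l h) = ψ (sumF l) :=
  rfl

end SOD

lemma sumF_cube (x : G) : sumF [x, x, x] = 3 • clsF G x := by
  simp only [sumF_cons, sumF_nil]
  abel

lemma data_eq_mk (l : List G) (h : l.prod ∈ commutator G) :
    data l h = SOD.mk ⟨sumF l, sumF_mem_ker h⟩ :=
  rfl

lemma data_eq_data_of_sub_mem {l l' : List G} (h : l.prod ∈ commutator G)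
    (h' : l'.prod ∈ commutator G) (hs : sumF l - sumF l' ∈ NSub G) : data l h = data l' h' :=
  SOD.mk_eq_mk_iff.mpr hs

lemma NSub_le_ker_of_forall_isConj_inv (hG : ∀ x : G, IsConj x x⁻¹)
    (ψ : FreeAbelianGroup (NCC G) →+ ZMod 2) : NSub G ≤ ψ.ker := by
  refine (AddSubgroup.closure_le _).mpr ?_
  rintro _ ⟨x, rfl⟩
  rw [SetLike.mem_coe, AddMonoidHom.mem_ker, ← clsF_eq_of_isConj (hG x), map_add,
    ZModModule.add_self]

section OrderThree

variable {g : G} (hg : orderOf g = 3)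
include hg

lemma ne_one_of_orderOf_eq_three : g ≠ 1 := by
  rintro rfl
  simp at hg

lemma sq_ne_one_of_orderOf_eq_three : g ^ 2 ≠ 1 :=
  pow_ne_one_of_lt_orderOf two_ne_zero (by omega)

lemma sq_ne_self_of_orderOf_eq_three : g ^ 2 ≠ g := fun h =>
  ne_one_of_orderOf_eq_three hg (mul_left_cancel (a := g) (by rw [← sq, h, mul_one]))

lemma inv_eq_sq_of_orderOf_eq_three : g⁻¹ = g ^ 2 :=
  inv_eq_of_mul_eq_one_right <| by
    rw [← pow_succ', show 2 + 1 = orderOf g by omega, pow_orderOf_eq_one]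

lemma eq_one_or_eq_or_eq_sq_of_mem_zpowers {x : G} (hx : x ∈ Subgroup.zpowers g) :
    x = 1 ∨ x = g ∨ x = g ^ 2 := by
  classical
  have hfin : IsOfFinOrder g := orderOf_pos_iff.mp (by omega)
  obtain ⟨n, hn, rfl⟩ := Finset.mem_image.mp (hfin.mem_zpowers_iff_mem_range_orderOf.mp hx)
  rw [hg, Finset.mem_range] at hn
  interval_cases n <;> simp

end OrderThree

section Cyclic

open scoped IsMulCommutative

variable {K : Type*} [Group K] [IsMulCommutative K] {g : K} (hg : orderOf g = 3)
  (hgen : ∀ x : K, x ∈ Subgroup.zpowers g)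
include hg

lemma not_isConj_sq_of_orderOf_eq_three : ¬IsConj g (g ^ 2) := by
  rw [isConj_iff_eq]
  exact (sq_ne_self_of_orderOf_eq_three hg).symm

lemma classCoeff_sub_clsF_self : (classCoeff g - classCoeff (g ^ 2)) (clsF K g) = 1 := by
  rw [AddMonoidHom.sub_apply,
    classCoeff_clsF_of_isConj (ne_one_of_orderOf_eq_three hg) (IsConj.refl _),
    classCoeff_clsF_of_not_isConj fun h => not_isConj_sq_of_orderOf_eq_three hg h.symm, sub_zero]

lemma classCoeff_sub_clsF_sq : (classCoeff g - classCoeff (g ^ 2)) (clsF K (g ^ 2)) = -1 := by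
  rw [AddMonoidHom.sub_apply,
    classCoeff_clsF_of_isConj (sq_ne_one_of_orderOf_eq_three hg) (IsConj.refl _),
    classCoeff_clsF_of_not_isConj (not_isConj_sq_of_orderOf_eq_three hg), zero_sub]

include hgen

lemma isConj_cases_of_orderOf_eq_three (y : K) : y = 1 ∨ IsConj g y ∨ IsConj (g ^ 2) y := by
  simpa only [isConj_iff_eq, eq_comm] using eq_one_or_eq_or_eq_sq_of_mem_zpowers hg (hgen y)

lemma eq_classCoeff_smul_add_classCoeff_sq_smul (x : FreeAbelianGroup (NCC K)) :
    x = classCoeff g x • clsF K g + classCoeff (g ^ 2) x • clsF K (g ^ 2) :=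
  eq_classCoeff_smul_add_classCoeff_smul (ne_one_of_orderOf_eq_three hg)
    (sq_ne_one_of_orderOf_eq_three hg) (not_isConj_sq_of_orderOf_eq_three hg)
    (isConj_cases_of_orderOf_eq_three hg hgen) x

lemma three_dvd_classCoeff_sub_of_mem_ker {x : FreeAbelianGroup (NCC K)}
    (hx : x ∈ (phi K).ker) : (3 : ℤ) ∣ classCoeff g x - classCoeff (g ^ 2) x := by
  have hmem := pow_mul_pow_mem_commutator_of_mem_ker (ne_one_of_orderOf_eq_three hg)
    (sq_ne_one_of_orderOf_eq_three hg) (not_isConj_sq_of_orderOf_eq_three hg)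
    (isConj_cases_of_orderOf_eq_three hg hgen) hx
  rw [commutator_eq_bot, Subgroup.mem_bot] at hmem
  have hpow : g ^ (classCoeff g x + 2 * classCoeff (g ^ 2) x) = 1 := by
    rwa [zpow_add, zpow_mul, zpow_ofNat]
  have hdvd := orderOf_dvd_iff_zpow_eq_one.mpr hpow
  rw [hg] at hdvd
  omega

lemma NSub_le_ker_classCoeff_sub : NSub K ≤ (classCoeff g - classCoeff (g ^ 2)).ker := by
  refine (AddSubgroup.closure_le _).mpr ?_
  rintro _ ⟨x, rfl⟩
  rw [SetLike.mem_coe, AddMonoidHom.mem_ker, map_add]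
  rcases eq_one_or_eq_or_eq_sq_of_mem_zpowers hg (hgen x) with rfl | rfl | rfl
  · rw [inv_one, clsF_one, map_zero, add_zero]
  · rw [inv_eq_sq_of_orderOf_eq_three hg, classCoeff_sub_clsF_self hg, classCoeff_sub_clsF_sq hg,
      add_neg_cancel]
  · have hinv : (g ^ 2)⁻¹ = g := by rw [← inv_eq_sq_of_orderOf_eq_three hg, inv_inv]
    rw [hinv, classCoeff_sub_clsF_self hg, classCoeff_sub_clsF_sq hg, neg_add_cancel]

lemma bijective_zmultiplesHom_data_cube (h : [g, g, g].prod ∈ commutator K) :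
    Function.Bijective (zmultiplesHom (SOD K) (data [g, g, g] h)) := by
  refine ⟨(injective_iff_map_eq_zero _).mpr fun k hk => ?_, fun z => ?_⟩
  · have h3k := congrArg (SOD.lift _ (NSub_le_ker_classCoeff_sub hg hgen)) hk
    rw [zmultiplesHom_apply, map_zsmul, map_zero, SOD.lift_data, sumF_cube, map_nsmul,
      classCoeff_sub_clsF_self hg, nsmul_eq_mul, Nat.cast_ofNat, mul_one, smul_eq_mul] at h3k
    omega
  · obtain ⟨x, rfl⟩ := SOD.mk_surjective z
    obtain ⟨k, hk⟩ := three_dvd_classCoeff_sub_of_mem_ker hg hgen x.2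
    refine ⟨k, ?_⟩
    rw [zmultiplesHom_apply, data_eq_mk, ← map_zsmul, SOD.mk_eq_mk_iff, AddSubgroup.coe_zsmul]
    have hdiff : k • sumF [g, g, g] - x.1
        = -classCoeff (g ^ 2) x.1 • (clsF K g + clsF K g⁻¹) := by
      conv_lhs => rw [eq_classCoeff_smul_add_classCoeff_sq_smul hg hgen x.1]
      rw [sumF_cube, ← natCast_zsmul, smul_smul, Nat.cast_ofNat, mul_comm, ← hk,
        inv_eq_sq_of_orderOf_eq_three hg]
      module
    rw [hdiff]
    exact AddSubgroup.zsmul_mem _ (clsF_add_clsF_inv_mem_NSub g) _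

lemma exists_addEquiv_int_data_cube (h : [g, g, g].prod ∈ commutator K) :
    ∃ e : SOD K ≃+ ℤ, e (data [g, g, g] h) = 1 := by
  refine ⟨(AddEquiv.ofBijective _ (bijective_zmultiplesHom_data_cube hg hgen h)).symm, ?_⟩
  rw [AddEquiv.symm_apply_eq, AddEquiv.ofBijective_apply, zmultiplesHom_apply, one_zsmul]

end Cyclic

section Sym3

open Equiv

variable {a : Perm (Fin 3)} (ha : a.IsThreeCycle)

lemma isConj_inv_perm_fin_three : ∀ x : Perm (Fin 3), IsConj x x⁻¹ := by
  decide

include ha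

lemma isConj_cases_perm_fin_three (x : Perm (Fin 3)) :
    x = 1 ∨ IsConj (swap 0 1) x ∨ IsConj a x :=
  (by decide : ∀ a x : Perm (Fin 3), a ^ 3 = 1 → a ≠ 1 →
      x = 1 ∨ IsConj (swap 0 1) x ∨ IsConj a x) a x (threeCycle_pow_three a ha) ha.ne_one

lemma not_isConj_swap_of_isThreeCycle : ¬IsConj (swap 0 1) a := fun h => by
  have hsign := isConj_iff_eq.mp (Perm.sign.map_isConj h)
  rw [Perm.sign_swap zero_ne_one, ha.sign] at hsign
  exact absurd hsign (by decide)

lemma even_classCoeff_swap_of_mem_ker {x : FreeAbelianGroup (NCC (Perm (Fin 3)))}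
    (hx : x ∈ (phi _).ker) : Even (classCoeff (swap 0 1) x) := by
  have hmem := pow_mul_pow_mem_commutator_of_mem_ker (swap_eq_one_iff.not.mpr zero_ne_one)
    ha.ne_one (not_isConj_swap_of_isThreeCycle ha) (isConj_cases_perm_fin_three ha) hx
  have hsign := Abelianization.commutator_subset_ker Perm.sign hmem
  rw [MonoidHom.mem_ker, map_mul, map_zpow, map_zpow, Perm.sign_swap zero_ne_one, ha.sign,
    one_zpow, mul_one, neg_one_zpow_eq_ite] at hsign
  by_contra hodd
  rw [if_neg hodd] at hsign
  exact absurd hsign (by decide)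

lemma eq_classCoeff_swap_smul_add_classCoeff_smul (x : FreeAbelianGroup (NCC (Perm (Fin 3)))) :
    x = classCoeff (swap 0 1) x • clsF _ (swap 0 1) + classCoeff a x • clsF _ a :=
  eq_classCoeff_smul_add_classCoeff_smul (swap_eq_one_iff.not.mpr zero_ne_one) ha.ne_one
    (not_isConj_swap_of_isThreeCycle ha) (isConj_cases_perm_fin_three ha) x

lemma closure_data_threeCycle_eq_top (h : [a].prod ∈ commutator (Perm (Fin 3))) :
    AddSubgroup.closure {data [a] h} = ⊤ := by
  refine eq_top_iff.mpr fun z _ => ?_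
  obtain ⟨x, rfl⟩ := SOD.mk_surjective z
  obtain ⟨j, hj⟩ := even_classCoeff_swap_of_mem_ker ha x.2
  have hx : SOD.mk x = classCoeff a x.1 • data [a] h := by
    rw [data_eq_mk, ← map_zsmul, SOD.mk_eq_mk_iff, AddSubgroup.coe_zsmul]
    have hdiff : x.1 - classCoeff a x.1 • sumF [a]
        = j • (clsF _ (swap 0 1) + clsF _ (swap 0 1)⁻¹) := by
      nth_rewrite 1 [eq_classCoeff_swap_smul_add_classCoeff_smul ha x.1]
      rw [swap_inv, sumF_cons, sumF_nil, add_zero, hj]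
      module
    rw [hdiff]
    exact AddSubgroup.zsmul_mem _ (clsF_add_clsF_inv_mem_NSub _) _
  rw [hx]
  exact AddSubgroup.zsmul_mem _ (AddSubgroup.subset_closure (Set.mem_singleton _)) _

lemma data_threeCycle_ne_zero (h : [a].prod ∈ commutator (Perm (Fin 3))) : data [a] h ≠ 0 := by
  let parity := (Int.castAddHom (ZMod 2)).comp (classCoeff a)
  intro h0
  have h1 := congrArg
    (SOD.lift parity (NSub_le_ker_of_forall_isConj_inv isConj_inv_perm_fin_three parity)) h0
  rw [SOD.lift_data, map_zero, sumF_cons, sumF_nil, add_zero, AddMonoidHom.comp_apply,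
    classCoeff_clsF_of_isConj ha.ne_one (IsConj.refl _)] at h1
  exact absurd h1 (by decide)

omit ha in
lemma two_nsmul_data_perm_fin_three_eq_zero (h : [a].prod ∈ commutator (Perm (Fin 3))) :
    2 • data [a] h = 0 := by
  rw [data_eq_mk, ← map_nsmul, SOD.mk_eq_zero_iff, AddSubgroup.coe_nsmul]
  change 2 • sumF [a] ∈ NSub _
  rw [sumF_cons, sumF_nil, add_zero, two_nsmul]
  nth_rewrite 2 [clsF_eq_of_isConj (isConj_inv_perm_fin_three a)]
  exact clsF_add_clsF_inv_mem_NSub a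

lemma addOrderOf_data_threeCycle (h : [a].prod ∈ commutator (Perm (Fin 3))) :
    addOrderOf (data [a] h) = 2 :=
  addOrderOf_eq_prime (two_nsmul_data_perm_fin_three_eq_zero h) (data_threeCycle_ne_zero ha h)

omit ha in
lemma data_cube_eq_data_perm_fin_three (h : [a, a, a].prod ∈ commutator (Perm (Fin 3)))
    (h' : [a].prod ∈ commutator (Perm (Fin 3))) : data [a, a, a] h = data [a] h' := by
  refine data_eq_data_of_sub_mem h h' ?_
  have hdiff : sumF [a, a, a] - sumF [a] = clsF _ a + clsF _ a⁻¹ := by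
    rw [← clsF_eq_of_isConj (isConj_inv_perm_fin_three a)]
    simp only [sumF_cons, sumF_nil]
    abel
  rw [hdiff]
  exact clsF_add_clsF_inv_mem_NSub a

end Sym3

lemma mem_zpowers_mk_self {x : G} (y : Subgroup.zpowers x) :
    y ∈ Subgroup.zpowers ⟨x, Subgroup.mem_zpowers x⟩ := by
  obtain ⟨k, hk⟩ := Subgroup.mem_zpowers_iff.mp y.2
  exact Subgroup.mem_zpowers_iff.mpr ⟨k, Subtype.ext (by rw [SubgroupClass.coe_zpow, hk])⟩

/-- for the inclusion `i : C₃ = ⟨a⟩ ↪ S₃` (`a` a 3-cycle), the induction map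
`𝔹_i : 𝔹_{C₃} → 𝔹_{S₃}` is surjective; it sends `[a, a, a]` to the generator `[â]` of
`𝔹_{S₃} ≅ ℤ/2ℤ`, and `𝔹_{C₃} ≅ ℤ` is generated by `[a, a, a]`. -/
theorem stmt18 (a : Equiv.Perm (Fin 3)) (ha : a.IsThreeCycle)
    (d3 : SOD ↥(Subgroup.zpowers a)) (d1 : SOD (Equiv.Perm (Fin 3)))
    (hd3 : d3 = data [⟨a, Subgroup.mem_zpowers a⟩, ⟨a, Subgroup.mem_zpowers a⟩,
      ⟨a, Subgroup.mem_zpowers a⟩] (zpowers_cube_mem a (threeCycle_pow_three a ha)))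
    (hd1 : d1 = data [a]
      (by rw [List.prod_singleton]; exact threeCycle_mem_commutator a ha)) :
    Function.Surjective (SODmap (Subgroup.zpowers a).subtype) ∧
    SODmap (Subgroup.zpowers a).subtype d3 = d1 ∧
    AddSubgroup.closure {d1} = ⊤ ∧
    addOrderOf d1 = 2 ∧
    ∃ e : SOD ↥(Subgroup.zpowers a) ≃+ ℤ, e d3 = 1 := by
  have hcube : [a, a, a].prod ∈ commutator (Equiv.Perm (Fin 3)) := by
    rw [List.prod_cons, List.prod_cons, List.prod_singleton, ← pow_three, threeCycle_pow_three a ha]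
    exact one_mem _
  have himage : SODmap (Subgroup.zpowers a).subtype d3 = d1 := by
    rw [hd3, hd1, SODmap_data _ _ _ hcube]
    exact data_cube_eq_data_perm_fin_three _ _
  have hgen : AddSubgroup.closure {d1} = ⊤ := hd1 ▸ closure_data_threeCycle_eq_top ha _
  refine ⟨?_, himage, hgen, hd1 ▸ addOrderOf_data_threeCycle ha _,
    hd3 ▸ exists_addEquiv_int_data_cube (by rw [Subgroup.orderOf_mk, ha.orderOf])
      mem_zpowers_mk_self _⟩
  rw [← AddMonoidHom.range_eq_top, eq_top_iff, ← hgen, AddSubgroup.closure_le,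
    Set.singleton_subset_iff]
  exact ⟨d3, himage⟩

end SingOrbit
end
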